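/- Let M be an atom-free MVS and (X,f) an M-full M-space. For m ∈ M let U_m = {(x,y) : f(x,y) ⊴ m}. Then the map h : M → {U_m : m ∈ M}, h(m) = U_m, satisfies: U_m ⊆ U_{m'} iff m ⊴ m'. If moreover (X,f) is M-convex, then U_m + U_{m'} = U_{m+m'}, where U + V is the intersection of all sets U_n containing V ∘ U; in particular h is a surjective MVS homomorphism onto ({U_m : m ∈ M}, +), which is itself an atom-free MVS with neutral element U_e. -/

import Mathlib

universe u v w

structure MVS (M : Type u) where
  add : M → M → M
  e : M
  assoc : ∀ a b c : M, add (add a b) c = add a (add b c)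
  add_e : ∀ a : M, add a e = a
  e_add : ∀ a : M, add e a = a
  eq_e_of_add_eq_e : ∀ a b : M, add a b = e → a = e ∧ b = e
  exists_common : ∀ a b : M, a ≠ e → b ≠ e →
    ∃ c, c ≠ e ∧ (∃ d, add c d = a) ∧ (∃ d, add c d = b)
  nontrivial : ∃ a : M, a ≠ e

variable {M : Type u} {X : Type v}

/-- `a ⊴ b` iff there is `c` with `a + c = b`. -/
def MVS.le (S : MVS M) (a b : M) : Prop := ∃ c, S.add a c = b

/-- `a ◁ b` iff there is `c ≠ e` with `a + c = b`. -/
def MVS.lt (S : MVS M) (a b : M) : Prop := ∃ c, c ≠ S.e ∧ S.add a c = b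

def MVS.Commutative (S : MVS M) : Prop := ∀ a b, S.add a b = S.add b a

/-- An MVS is atom-free if it is commutative and every `m ≠ e` admits `n ≠ e` with `n ◁ m`. -/
def MVS.AtomFree (S : MVS M) : Prop :=
  S.Commutative ∧ ∀ m, m ≠ S.e → ∃ n, n ≠ S.e ∧ S.lt n m

/-- A quasimetric function: triangle inequality and `f x x = e`. -/
def IsQuasimetric (S : MVS M) (f : X → X → M) : Prop :=
  (∀ x y z, S.le (f x z) (S.add (f x y) (f y z))) ∧ ∀ x, f x x = S.e

/-- Open ball `B_f(x,m) = {y | f x y ◁ m}`. -/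
def ball (S : MVS M) (f : X → X → M) (x : X) (m : M) : Set X := {y | S.lt (f x y) m}

/-- Closed ball `B̄_f(x,m) = {y | f x y ⊴ m}`. -/
def closedBall (S : MVS M) (f : X → X → M) (x : X) (m : M) : Set X := {y | S.le (f x y) m}

/-- The topology induced by a quasimetric function: open balls form a neighbourhood base. -/
def qTopology (S : MVS M) (f : X → X → M) : TopologicalSpace X :=
  TopologicalSpace.mkOfNhds fun x => ⨅ m ∈ {m : M | m ≠ S.e}, Filter.principal (ball S f x m)

/-- Entourage `U_m = {(x,y) | f x y ⊴ m}`. -/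
def ent (S : MVS M) (f : X → X → M) (m : M) : Set (X × X) := {p | S.le (f p.1 p.2) m}

/-- `qcomp A B = A ∘ B = {(x,z) | ∃ y, (x,y) ∈ B ∧ (y,z) ∈ A}`. -/
def qcomp (A B : Set (X × X)) : Set (X × X) := {p | ∃ y, (p.1, y) ∈ B ∧ (y, p.2) ∈ A}

def IsQuasiUniformity (U : Set (Set (X × X))) : Prop :=
  U.Nonempty ∧
  (∀ u ∈ U, ∀ x : X, (x, x) ∈ u) ∧
  (∀ u ∈ U, ∀ v : Set (X × X), u ⊆ v → v ∈ U) ∧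
  (∀ u ∈ U, ∀ v ∈ U, u ∩ v ∈ U) ∧
  (∀ u ∈ U, ∃ v ∈ U, qcomp v v ⊆ u)

def IsBaseOf (B U : Set (Set (X × X))) : Prop := B ⊆ U ∧ ∀ u ∈ U, ∃ b ∈ B, b ⊆ u

/-- `U + V` : the intersection of all entourages `U_n` containing `V ∘ U`. -/
def addEnt (S : MVS M) (f : X → X → M) (A B : Set (X × X)) : Set (X × X) :=
  ⋂₀ {w | (∃ m, ent S f m = w) ∧ qcomp B A ⊆ w}

/-- The topology induced by a base of a quasiuniformity: sections `U[x]` form a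
neighbourhood base. -/
def quTopology (B : Set (Set (X × X))) : TopologicalSpace X :=
  TopologicalSpace.mkOfNhds fun x => ⨅ u ∈ B, Filter.principal {y | (x, y) ∈ u}

/-- `n`-fold sum `m + ⋯ + m`. -/
def nfold (S : MVS M) : ℕ → M → M
  | 0, _ => S.e
  | Nat.succ n, m => S.add m (nfold S n m)

/-!
Fullness gives a pair at distance exactly `m`, so `U_m ⊆ U_{m'}` forces `m ⊴ m'`. The triangle
inequality puts `U_{m'} ∘ U_m` inside `U_{m + m'}`, while convexity splits a pair at distance
exactly `m + m'` through a midpoint, so `U_{m'} ∘ U_m` lies in no smaller `U_n`; hence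
`U_m + U_{m'} = U_{m + m'}`. Thus `m ↦ U_m` is a surjection carrying `+` to `+` whose fibre over
`U_e` is `{e}`, and the MVS axioms and atom-freeness transfer along any such map.
-/

namespace MVS

variable (S : MVS M)

theorem le_refl (a : M) : S.le a a := ⟨S.e, S.add_e a⟩

theorem le_trans {a b c : M} (hab : S.le a b) (hbc : S.le b c) : S.le a c := by
  obtain ⟨u, rfl⟩ := hab
  obtain ⟨v, rfl⟩ := hbc
  exact ⟨S.add u v, (S.assoc a u v).symm⟩

theorem add_le_add (hc : S.Commutative) {a b a' b' : M} (ha : S.le a a') (hb : S.le b b') :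
    S.le (S.add a b) (S.add a' b') := by
  obtain ⟨u, rfl⟩ := ha
  obtain ⟨v, rfl⟩ := hb
  refine ⟨S.add u v, ?_⟩
  rw [S.assoc, ← S.assoc b u v, hc b u, S.assoc u b v, ← S.assoc a u (S.add b v)]

theorem eq_e_of_le_e {a : M} (h : S.le a S.e) : a = S.e :=
  let ⟨c, hc⟩ := h
  (S.eq_e_of_add_eq_e a c hc).1

end MVS

section Transfer

variable {N : Type w}

def Function.Surjective.mvs (S : MVS M) {h : M → N} (hh : Function.Surjective h)
    (add : N → N → N) (h_add : ∀ a b, h (S.add a b) = add (h a) (h b))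
    (h_eq_e : ∀ a, h a = h S.e → a = S.e) : MVS N where
  add := add
  e := h S.e
  assoc := hh.forall₃.2 fun a b c => by simp only [← h_add, S.assoc]
  add_e := hh.forall.2 fun a => by rw [← h_add, S.add_e]
  e_add := hh.forall.2 fun a => by rw [← h_add, S.e_add]
  eq_e_of_add_eq_e := hh.forall₂.2 fun a b hab => by
    rw [← h_add] at hab
    obtain ⟨rfl, rfl⟩ := S.eq_e_of_add_eq_e a b (h_eq_e _ hab)
    exact ⟨rfl, rfl⟩
  exists_common := hh.forall₂.2 fun a b ha hb => by
    obtain ⟨c, hc, ⟨d, rfl⟩, ⟨d', rfl⟩⟩ :=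
      S.exists_common a b (mt (congrArg h) ha) (mt (congrArg h) hb)
    exact ⟨h c, mt (h_eq_e c) hc, ⟨h d, (h_add c d).symm⟩, ⟨h d', (h_add c d').symm⟩⟩
  nontrivial :=
    let ⟨a, ha⟩ := S.nontrivial
    ⟨h a, mt (h_eq_e a) ha⟩

theorem Function.Surjective.mvs_atomFree {S : MVS M} (hS : S.AtomFree) {h : M → N}
    (hh : Function.Surjective h) (add : N → N → N)
    (h_add : ∀ a b, h (S.add a b) = add (h a) (h b)) (h_eq_e : ∀ a, h a = h S.e → a = S.e) :
    (hh.mvs S add h_add h_eq_e).AtomFree := by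
  refine ⟨hh.forall₂.2 fun a b => ?_, hh.forall.2 fun a ha => ?_⟩
  · change add (h a) (h b) = add (h b) (h a)
    rw [← h_add, ← h_add, hS.1]
  · obtain ⟨n, hn, c, hc, rfl⟩ := hS.2 a (mt (congrArg h) ha)
    exact ⟨h n, mt (h_eq_e n) hn, h c, mt (h_eq_e c) hc, (h_add n c).symm⟩

end Transfer

section Entourages

variable (S : MVS M) (f : X → X → M)

def IsMConvex : Prop :=
  ∀ (m2 m3 : M) (x y : X), f x y = S.add m2 m3 → ∃ z, f x z = m2 ∧ f z y = m3

theorem ent_mono {m m' : M} (h : S.le m m') : ent S f m ⊆ ent S f m' :=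
  fun _ hp => S.le_trans hp h

theorem mem_ent_self {x y : X} : (x, y) ∈ ent S f (f x y) := S.le_refl (f x y)

variable {S f}

theorem ent_subset_iff (hfull : Function.Surjective (Function.uncurry f)) (m m' : M) :
    ent S f m ⊆ ent S f m' ↔ S.le m m' := by
  refine ⟨fun h => ?_, ent_mono S f⟩
  obtain ⟨⟨x, y⟩, rfl : f x y = m⟩ := hfull m
  exact h (mem_ent_self S f)

theorem ent_eq_ent_e_iff (hfull : Function.Surjective (Function.uncurry f)) (m : M) :
    ent S f m = ent S f S.e ↔ m = S.e :=
  ⟨fun h => S.eq_e_of_le_e ((ent_subset_iff hfull m S.e).1 h.le), fun h => h ▸ rfl⟩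

theorem qcomp_ent_subset_ent_add (hc : S.Commutative) (hq : IsQuasimetric S f) (m m' : M) :
    qcomp (ent S f m') (ent S f m) ⊆ ent S f (S.add m m') := by
  rintro ⟨x, z⟩ ⟨y, hxy, hyz⟩
  exact S.le_trans (hq.1 x y z) (S.add_le_add hc hxy hyz)

theorem add_le_of_qcomp_ent_subset (hfull : Function.Surjective (Function.uncurry f))
    (hconv : IsMConvex S f) {m m' n : M} (h : qcomp (ent S f m') (ent S f m) ⊆ ent S f n) :
    S.le (S.add m m') n := by
  obtain ⟨⟨x, y⟩, hxy : f x y = S.add m m'⟩ := hfull (S.add m m')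
  obtain ⟨z, rfl, rfl⟩ := hconv m m' x y hxy
  have hmem : (x, y) ∈ qcomp (ent S f (f z y)) (ent S f (f x z)) :=
    ⟨z, mem_ent_self S f, mem_ent_self S f⟩
  have hle : S.le (f x y) n := h hmem
  rwa [hxy] at hle

theorem addEnt_ent (hc : S.Commutative) (hq : IsQuasimetric S f)
    (hfull : Function.Surjective (Function.uncurry f)) (hconv : IsMConvex S f) (m m' : M) :
    addEnt S f (ent S f m) (ent S f m') = ent S f (S.add m m') := by
  refine subset_antisymm ?_ ?_
  · exact Set.sInter_subset_of_mem ⟨⟨_, rfl⟩, qcomp_ent_subset_ent_add hc hq m m'⟩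
  · rintro p hp w ⟨⟨n, rfl⟩, hw⟩
    exact ent_mono S f (add_le_of_qcomp_ent_subset hfull hconv hw) hp

variable (S f)

abbrev Ents : Type v := {U : Set (X × X) // ∃ m, ent S f m = U}

def Ents.mk (m : M) : Ents S f := ⟨ent S f m, m, rfl⟩

theorem Ents.mk_surjective : Function.Surjective (Ents.mk S f) := by
  rintro ⟨U, m, rfl⟩
  exact ⟨m, rfl⟩

variable {S f}

def Ents.add (hadd : ∀ m m', addEnt S f (ent S f m) (ent S f m') = ent S f (S.add m m'))
    (A B : Ents S f) : Ents S f :=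
  ⟨addEnt S f A.1 B.1, by
    obtain ⟨_, a, rfl⟩ := A
    obtain ⟨_, b, rfl⟩ := B
    exact ⟨S.add a b, (hadd a b).symm⟩⟩

end Entourages

theorem stmt_17 (S : MVS M) (hAF : S.AtomFree) (f : X → X → M)
    (hq : IsQuasimetric S f) (hfull : Function.Surjective (Function.uncurry f)) :
    (∀ m m' : M, ent S f m ⊆ ent S f m' ↔ S.le m m') ∧
    ((∀ (m2 m3 : M) (x y : X), f x y = S.add m2 m3 →
        ∃ z, f x z = m2 ∧ f z y = m3) →
      (∀ m m' : M, addEnt S f (ent S f m) (ent S f m') = ent S f (S.add m m')) ∧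
      ∃ T : MVS {U : Set (X × X) // ∃ m, ent S f m = U},
        T.e = ⟨ent S f S.e, S.e, rfl⟩ ∧
        (∀ A B : {U : Set (X × X) // ∃ m, ent S f m = U},
          (T.add A B).1 = addEnt S f A.1 B.1) ∧
        T.AtomFree ∧
        Function.Surjective
          (fun m : M => (⟨ent S f m, m, rfl⟩ : {U : Set (X × X) // ∃ m, ent S f m = U})) ∧
        (∀ m : M,
          (⟨ent S f m, m, rfl⟩ : {U : Set (X × X) // ∃ m, ent S f m = U}) = T.e ↔ m = S.e) ∧
        (∀ m n : M,
          (⟨ent S f (S.add m n), S.add m n, rfl⟩ : {U : Set (X × X) // ∃ m, ent S f m = U}) =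
            T.add ⟨ent S f m, m, rfl⟩ ⟨ent S f n, n, rfl⟩)) := by
  refine ⟨ent_subset_iff hfull, fun hconv => ?_⟩
  have hadd := addEnt_ent hAF.1 hq hfull hconv
  have h_add : ∀ m n, Ents.mk S f (S.add m n) = Ents.add hadd (Ents.mk S f m) (Ents.mk S f n) :=
    fun m n => Subtype.ext (hadd m n).symm
  have h_eq_e : ∀ m, Ents.mk S f m = Ents.mk S f S.e ↔ m = S.e :=
    fun m => Subtype.ext_iff.trans (ent_eq_ent_e_iff hfull m)
  have hsurj := Ents.mk_surjective S f
  exact ⟨hadd, hsurj.mvs S _ h_add (fun m => (h_eq_e m).1), rfl, fun _ _ => rfl,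
    hsurj.mvs_atomFree hAF _ h_add _, hsurj, h_eq_e, h_add⟩
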